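/- Let N be a positive integer. The mapping sending a multiset Z of real numbers with elements in [0,1] and cardinality M satisfying 1 ≤ M ≤ N to the vector (∑_{z ∈ Z} z^1, ..., ∑_{z ∈ Z} z^N, card(Z)) ∈ ℝ^{N+1} is injective: if Z_1 and Z_2 are two such multisets (possibly of different cardinalities) and Z_1 ≠ Z_2, then their images differ. -/

import Mathlib

/-- The extended sum-of-power mapping: sends a multiset `Z` of reals to the
vector `(∑_{z∈Z} z^1, …, ∑_{z∈Z} z^N, card Z) ∈ ℝ^{N+1}`. -/
noncomputable def sumOfPowerWithCard (N : ℕ) (Z : Multiset ℝ) : Fin (N + 1) → ℝ :=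
  Fin.snoc (fun k : Fin N => (Z.map (fun z => z ^ (k.val + 1))).sum)
    (Multiset.card Z : ℝ)

/-!
By Newton's identities, `k e_k` is a polynomial in `e_0, …, e_{k-1}` and the power sums
`p_1, …, p_k`, so in characteristic zero the power sums up to `N` determine the elementary
symmetric functions up to `N`. When the cardinality `M ≤ N` is known as well, these are all the
coefficients of `∏_{z ∈ Z} (X - z)`, whose roots recover `Z`.
-/

open Polynomial Finset

variable {R : Type*} [CommRing R]

theorem Multiset.mul_esymm_eq_sum (s : Multiset R) (k : ℕ) :
    k * s.esymm k = (-1) ^ (k + 1) * ∑ a ∈ HasAntidiagonal.antidiagonal k with a.1 < k,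
      (-1) ^ a.1 * s.esymm a.1 * (s.map (· ^ a.2)).sum := by
  classical
  have h := congrArg (MvPolynomial.aeval fun x : s ↦ (x : R))
    (MvPolynomial.mul_esymm_eq_sum s R k)
  simp only [map_mul, map_sum, map_pow, map_neg, map_one, map_natCast, MvPolynomial.psum,
    MvPolynomial.aeval_esymm_eq_multiset_esymm, MvPolynomial.aeval_X, Multiset.map_univ_coe] at h
  rw [h]
  congr! 3 with a
  exact congrArg _ (map_univ s _)

theorem Multiset.esymm_eq_of_sum_pow_eq [NoZeroDivisors R] [CharZero R] {s t : Multiset R}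
    {n : ℕ}
    (hp : ∀ j, 0 < j → j ≤ n → (s.map (· ^ j)).sum = (t.map (· ^ j)).sum) :
    ∀ k ≤ n, s.esymm k = t.esymm k := by
  intro k
  induction k using Nat.strong_induction_on with
  | _ k ih =>
    intro hk
    rcases Nat.eq_zero_or_pos k with rfl | hk₀
    · simp [Multiset.esymm]
    have hsum : ∑ a ∈ HasAntidiagonal.antidiagonal k with a.1 < k,
          (-1) ^ a.1 * s.esymm a.1 * (s.map (· ^ a.2)).sum =
        ∑ a ∈ HasAntidiagonal.antidiagonal k with a.1 < k,
          (-1) ^ a.1 * t.esymm a.1 * (t.map (· ^ a.2)).sum := by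
      refine sum_congr rfl fun a ha => ?_
      rw [Finset.mem_filter, HasAntidiagonal.mem_antidiagonal] at ha
      rw [ih a.1 ha.2 (by omega), hp a.2 (by omega) (by omega)]
    refine mul_left_cancel₀ (Nat.cast_ne_zero.mpr hk₀.ne' : (k : R) ≠ 0) ?_
    rw [mul_esymm_eq_sum, mul_esymm_eq_sum, hsum]

theorem Multiset.eq_of_card_eq_of_esymm_eq [IsDomain R] {s t : Multiset R}
    (hcard : card s = card t) (he : ∀ k ≤ card s, s.esymm k = t.esymm k) : s = t := by
  have hprod : (s.map (X - C ·)).prod = (t.map (X - C ·)).prod := by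
    ext n
    rcases le_or_gt n (card s) with hn | hn
    · rw [prod_X_sub_C_coeff _ hn, prod_X_sub_C_coeff _ (hcard ▸ hn), ← hcard,
        he _ (Nat.sub_le _ _)]
    · rw [coeff_eq_zero_of_natDegree_lt, coeff_eq_zero_of_natDegree_lt] <;>
        rw [natDegree_multiset_prod_X_sub_C_eq_card] <;> omega
  simpa [roots_multiset_prod_X_sub_C] using congrArg roots hprod

theorem Multiset.eq_of_card_eq_of_sum_pow_eq [IsDomain R] [CharZero R] {s t : Multiset R}
    {n : ℕ}
    (hcard : card s = card t) (hn : card s ≤ n)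
    (hp : ∀ j, 0 < j → j ≤ n → (s.map (· ^ j)).sum = (t.map (· ^ j)).sum) : s = t :=
  eq_of_card_eq_of_esymm_eq hcard fun k hk => esymm_eq_of_sum_pow_eq hp k (hk.trans hn)

theorem sumOfPowerWithCard_injective_general (N : ℕ)
    (Z₁ Z₂ : Multiset ℝ)
    (hcard₁ : 1 ≤ Multiset.card Z₁ ∧ Multiset.card Z₁ ≤ N)
    (hne : Z₁ ≠ Z₂) :
    sumOfPowerWithCard N Z₁ ≠ sumOfPowerWithCard N Z₂ := by
  intro h
  refine hne (Multiset.eq_of_card_eq_of_sum_pow_eq ?_ hcard₁.2 fun j hj₀ hjN => ?_)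
  · simpa [sumOfPowerWithCard] using congrFun h (Fin.last N)
  · obtain ⟨k, rfl⟩ : ∃ k, j = k + 1 := Nat.exists_eq_add_one.mpr hj₀
    simpa [sumOfPowerWithCard] using congrFun h (Fin.castSucc ⟨k, by omega⟩)

/-- Injectivity of the sum-of-power mapping extended with the cardinality
coordinate, on multisets with elements in `[0,1]` and cardinality `M` with
`1 ≤ M ≤ N` (possibly different cardinalities for the two multisets). -/
theorem sumOfPowerWithCard_injective (N : ℕ) (hN : 0 < N)
    (Z₁ Z₂ : Multiset ℝ)
    (hcard₁ : 1 ≤ Multiset.card Z₁ ∧ Multiset.card Z₁ ≤ N)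
    (hcard₂ : 1 ≤ Multiset.card Z₂ ∧ Multiset.card Z₂ ≤ N)
    (hmem₁ : ∀ z ∈ Z₁, z ∈ Set.Icc (0 : ℝ) 1)
    (hmem₂ : ∀ z ∈ Z₂, z ∈ Set.Icc (0 : ℝ) 1)
    (hne : Z₁ ≠ Z₂) :
    sumOfPowerWithCard N Z₁ ≠ sumOfPowerWithCard N Z₂ :=
  sumOfPowerWithCard_injective_general N Z₁ Z₂ hcard₁ hne
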